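/- Let Θ be a finite nonempty set and q ∈ Δ(Θ). For every q' ∈ Δ(Θ) define S(q | q') as the smallest ε ∈ [0,1] for which there exists p ∈ Δ(Θ) with q = (1 − ε)·q' + ε·p. Then for every integer K ≥ 1 there exists a (1/K)-divisible q_K ∈ Δ(Θ), i.e., K·q_K(θ) ∈ ℕ for every θ, such that ‖q_K − q‖ ≤ (|Θ| − 1)/K and S(q | q_K) ≤ (|Θ| − 1)·|Θ|/K. -/

import Mathlib

open Finset

/-- `p` is a probability vector on the finite set `Z`. -/
def IsProbVec {Z : Type*} [Fintype Z] (p : Z → ℝ) : Prop :=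
  (∀ z, 0 ≤ p z) ∧ ∑ z, p z = 1

/-- Total variation distance `‖p − q‖ = (1/2)·Σ_z |p z − q z|`. -/
noncomputable def tv {Z : Type*} [Fintype Z] (p q : Z → ℝ) : ℝ :=
  (∑ z, |p z - q z|) / 2

/-- `S(q | q')`: the smallest `ε ∈ [0,1]` for which there exists a probability
vector `p` with `q = (1 − ε)·q' + ε·p`. -/
noncomputable def Smix {Θ : Type*} [Fintype Θ] (q q' : Θ → ℝ) : ℝ :=
  sInf {ε : ℝ | 0 ≤ ε ∧ ε ≤ 1 ∧
    ∃ p : Θ → ℝ, IsProbVec p ∧ ∀ θ, q θ = (1 - ε) * q' θ + ε * p θ}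

/-!
Round every `K * q θ` down and give the whole remainder, which is less than `|Θ|`, to a
coordinate `θ₀` where `q` is largest. Then `q_K ≤ q` away from `θ₀`, so `‖q_K - q‖` is the
excess `q_K θ₀ - q θ₀ ≤ (|Θ| - 1)/K`. Since `q θ₀ ≥ 1/|Θ|`, the weight `ε = |Θ| (|Θ| - 1)/K`
makes `q - (1 - ε) q_K` nonnegative also at `θ₀`, and normalising it gives the `p` in the
definition of `S(q | q_K)`.
-/

section

variable {Θ : Type*} [Fintype Θ]

theorem IsProbVec.one_le_card_mul_of_forall_le {q : Θ → ℝ} (hq : IsProbVec q) {θ₀ : Θ}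
    (hmax : ∀ θ, q θ ≤ q θ₀) : 1 ≤ Fintype.card Θ * q θ₀ := by
  simpa [hq.2] using sum_le_card_nsmul univ q (q θ₀) fun θ _ => hmax θ

theorem sum_erase_sub_eq [DecidableEq Θ] {q q' : Θ → ℝ} (hsum : ∑ θ, q' θ = ∑ θ, q θ) (θ₀ : Θ) :
    ∑ θ ∈ univ.erase θ₀, (q θ - q' θ) = q' θ₀ - q θ₀ := by
  have htot : ∑ θ, (q θ - q' θ) = 0 := by rw [sum_sub_distrib, hsum, sub_self]
  linarith [sum_erase_add univ (fun θ => q θ - q' θ) (mem_univ θ₀)]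

theorem tv_eq_of_le_off {q q' : Θ → ℝ} (hsum : ∑ θ, q' θ = ∑ θ, q θ) {θ₀ : Θ}
    (hoff : ∀ θ ≠ θ₀, q' θ ≤ q θ) : tv q' q = q' θ₀ - q θ₀ := by
  classical
  have hsub := sum_erase_sub_eq hsum θ₀
  have hθ₀ : 0 ≤ q' θ₀ - q θ₀ :=
    hsub ▸ sum_nonneg fun θ hθ => sub_nonneg.2 (hoff θ (ne_of_mem_erase hθ))
  have herase : ∑ θ ∈ univ.erase θ₀, |q' θ - q θ| = ∑ θ ∈ univ.erase θ₀, (q θ - q' θ) :=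
    sum_congr rfl fun θ hθ => by
      rw [abs_of_nonpos (sub_nonpos.2 (hoff θ (ne_of_mem_erase hθ))), neg_sub]
  rw [tv, ← sum_erase_add _ _ (mem_univ θ₀), herase, hsub, abs_of_nonneg hθ₀]
  ring

theorem Smix_le_of_mem {q q' p : Θ → ℝ} {ε : ℝ} (hε₀ : 0 ≤ ε) (hε₁ : ε ≤ 1)
    (hp : IsProbVec p) (h : ∀ θ, q θ = (1 - ε) * q' θ + ε * p θ) : Smix q q' ≤ ε :=
  csInf_le ⟨0, fun _ hx => hx.1⟩ ⟨hε₀, hε₁, p, hp, h⟩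

theorem Smix_le {q q' : Θ → ℝ} (hq : IsProbVec q) (hq' : IsProbVec q') {ε : ℝ} (hε : 0 ≤ ε)
    (h : ∀ θ, (1 - ε) * q' θ ≤ q θ) : Smix q q' ≤ ε := by
  rcases le_or_gt 1 ε with h₁ | h₁
  · exact (Smix_le_of_mem zero_le_one le_rfl hq fun θ => by ring).trans h₁
  rcases hε.eq_or_lt with rfl | hε
  · have heq : ∀ θ ∈ univ, q' θ = q θ :=
      (sum_eq_sum_iff_of_le fun θ _ => by simpa using h θ).1 (by rw [hq.2, hq'.2])
    exact Smix_le_of_mem le_rfl zero_le_one hq fun θ => by simp [heq θ (mem_univ θ)]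
  -- the residual `p = (q - (1 - ε) q') / ε` is a probability vector
  refine Smix_le_of_mem hε.le h₁.le
    ⟨fun θ => div_nonneg (sub_nonneg.2 (h θ)) hε.le, ?_⟩ fun θ => by field_simp; ring
  rw [← sum_div, sum_sub_distrib, ← mul_sum, hq.2, hq'.2]
  field_simp
  ring

theorem Smix_le_div {q q' : Θ → ℝ} (hq : IsProbVec q) (hq' : IsProbVec q') {θ₀ : Θ}
    (hpos : 0 < q θ₀) (hoff : ∀ θ ≠ θ₀, q' θ ≤ q θ) {δ : ℝ} (hδ : q' θ₀ - q θ₀ ≤ δ) :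
    Smix q q' ≤ δ / q θ₀ := by
  classical
  have hle : q θ₀ ≤ q' θ₀ := by
    rw [← sub_nonneg, ← sum_erase_sub_eq (hq'.2.trans hq.2.symm)]
    exact sum_nonneg fun θ hθ => sub_nonneg.2 (hoff θ (ne_of_mem_erase hθ))
  have hε : 0 ≤ δ / q θ₀ := div_nonneg (by linarith) hpos.le
  refine Smix_le hq hq' hε fun θ => ?_
  by_cases hθ : θ = θ₀
  · subst hθ
    have : δ ≤ δ / q θ * q' θ :=
      calc δ = δ / q θ * q θ := (div_mul_cancel₀ _ hpos.ne').symm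
        _ ≤ δ / q θ * q' θ := mul_le_mul_of_nonneg_left hle hε
    linarith
  · linarith [mul_nonneg hε (hq'.1 θ), hoff θ hθ]

theorem exists_nat_counts {q : Θ → ℝ} (hq : IsProbVec q) (K : ℕ) (θ₀ : Θ) :
    ∃ c : Θ → ℕ, ∑ θ, c θ = K ∧ (∀ θ ≠ θ₀, (c θ : ℝ) ≤ K * q θ) ∧
      (c θ₀ : ℝ) + 1 ≤ K * q θ₀ + Fintype.card Θ := by
  classical
  set f : Θ → ℕ := fun θ => ⌊K * q θ⌋₊
  have hf : ∀ θ, (f θ : ℝ) ≤ K * q θ := fun θ =>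
    Nat.floor_le (mul_nonneg K.cast_nonneg (hq.1 θ))
  have hfK : ∑ θ, f θ ≤ K := by
    have : ∑ θ, (f θ : ℝ) ≤ K := by
      simpa [← mul_sum, hq.2] using sum_le_sum fun θ (_ : θ ∈ univ) => hf θ
    exact_mod_cast this
  -- the remainder `r` is the sum of the fractional parts of the `K * q θ`
  set r := K - ∑ θ, f θ
  have hr : r < Fintype.card Θ := by
    have : (r : ℝ) < Fintype.card Θ := by
      have hlt := sum_lt_sum_of_nonempty ⟨θ₀, mem_univ _⟩
        fun θ (_ : θ ∈ univ) => sub_lt_iff_lt_add'.2 (Nat.lt_floor_add_one (K * q θ))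
      simpa [r, Nat.cast_sub hfK, sum_sub_distrib, ← mul_sum, hq.2] using hlt
    exact_mod_cast this
  refine ⟨f + Pi.single θ₀ r, ?_, fun θ hθ => ?_, ?_⟩
  · simp [sum_add_distrib, r, hfK]
  · simpa [Pi.single_eq_of_ne hθ] using hf θ
  · have : ((r + 1 : ℕ) : ℝ) ≤ Fintype.card Θ := by exact_mod_cast hr
    simp only [Pi.add_apply, Pi.single_eq_same, Nat.cast_add, Nat.cast_one] at this ⊢
    linarith [hf θ₀]

theorem exists_divisible_approx {q : Θ → ℝ} (hq : IsProbVec q) {K : ℕ} (hK : 0 < K) (θ₀ : Θ) :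
    ∃ qK : Θ → ℝ, IsProbVec qK ∧ (∀ θ, ∃ n : ℕ, (K : ℝ) * qK θ = n) ∧
      (∀ θ ≠ θ₀, qK θ ≤ q θ) ∧ qK θ₀ - q θ₀ ≤ ((Fintype.card Θ : ℝ) - 1) / K := by
  obtain ⟨c, hsum, hoff, hθ₀⟩ := exists_nat_counts hq K θ₀
  have hK' : (0 : ℝ) < K := by exact_mod_cast hK
  refine ⟨fun θ => c θ / K, ⟨fun θ => by positivity, ?_⟩, fun θ => ⟨c θ, by field_simp⟩,
    fun θ hθ => (div_le_iff₀' hK').2 (hoff θ hθ), ?_⟩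
  · rw [← sum_div, ← Nat.cast_sum, hsum, div_self hK'.ne']
  · rw [div_sub' hK'.ne', div_le_div_iff_of_pos_right hK']
    linarith

end

theorem discrete_approximation {Θ : Type*} [Fintype Θ] [Nonempty Θ]
    (q : Θ → ℝ) (hq : IsProbVec q) (K : ℕ) (hK : 1 ≤ K) :
    ∃ qK : Θ → ℝ, IsProbVec qK ∧
      (∀ θ, ∃ n : ℕ, (K : ℝ) * qK θ = n) ∧
      tv qK q ≤ ((Fintype.card Θ : ℝ) - 1) / K ∧
      Smix q qK ≤ ((Fintype.card Θ : ℝ) - 1) * (Fintype.card Θ : ℝ) / K := by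
  obtain ⟨θ₀, -, hmax⟩ := exists_max_image univ q univ_nonempty
  obtain ⟨qK, hqK, hdiv, hoff, hθ₀⟩ := exists_divisible_approx hq hK θ₀
  have hmass : 1 ≤ Fintype.card Θ * q θ₀ :=
    hq.one_le_card_mul_of_forall_le fun θ => hmax θ (mem_univ θ)
  have hpos : 0 < q θ₀ := pos_of_mul_pos_right (one_pos.trans_le hmass) (Nat.cast_nonneg _)
  have hδ : 0 ≤ ((Fintype.card Θ : ℝ) - 1) / K := by
    have : (1 : ℝ) ≤ Fintype.card Θ := by exact_mod_cast Fintype.card_pos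
    exact div_nonneg (sub_nonneg.2 this) K.cast_nonneg
  refine ⟨qK, hqK, hdiv, (tv_eq_of_le_off (hqK.2.trans hq.2.symm) hoff).trans_le hθ₀, ?_⟩
  calc Smix q qK ≤ ((Fintype.card Θ : ℝ) - 1) / K / q θ₀ := Smix_le_div hq hqK hpos hoff hθ₀
    _ ≤ ((Fintype.card Θ : ℝ) - 1) / K * (Fintype.card Θ * q θ₀) / q θ₀ := by
      gcongr
      exact le_mul_of_one_le_right hδ hmass
    _ = ((Fintype.card Θ : ℝ) - 1) * (Fintype.card Θ : ℝ) / K := by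
      field_simp
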